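/- For sets I, J with ∅ ≠ I ⊊ J, the antiortholattice D2^I ⊕ D2 ⊕ D2^I embeds as a BZ-lattice into D2^J ⊕ D2^J, via the map sending the lower Boolean block D2^I isomorphically onto the ideal of D2^J generated by the atoms indexed by I, and acting compatibly with the involution on the upper block. -/
import Mathlib


open scoped Classical

/-- A bounded involution lattice (BI-lattice): a bounded lattice with an
order-reversing involution. -/
class BILattice (α : Type*) extends Lattice α, BoundedOrder α where
  inv : α → α
  inv_anti : ∀ a b : α, a ≤ b → inv b ≤ inv a
  inv_inv : ∀ a : α, inv (inv a) = a

open BILattice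

/-- A pseudo-Kleene algebra. -/
class PseudoKleene (α : Type*) extends BILattice α where
  kleene : ∀ a b : α, a ⊓ inv a ≤ b ⊔ inv b

/-- A Brouwer–Zadeh lattice. -/
class BZLattice (α : Type*) extends PseudoKleene α where
  brou : α → α
  brou_anti : ∀ a b : α, a ≤ b → brou b ≤ brou a
  brou_inf : ∀ a : α, a ⊓ brou a = ⊥
  le_brou_brou : ∀ a : α, a ≤ brou (brou a)
  brou_brou : ∀ a : α, brou (brou a) = inv (brou a)

open BZLattice

/-- A PBZ*-lattice: a paraorthomodular BZ-lattice satisfying condition (∗). -/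
class PBZLattice (α : Type*) extends BZLattice α where
  paraortho : ∀ a b : α, a ≤ b → inv a ⊓ b = ⊥ → a = b
  star : ∀ a : α, brou (a ⊓ inv a) = brou a ⊔ brou (inv a)

/-- An antiortholattice: a PBZ*-lattice whose only sharp elements are ⊥ and ⊤. -/
class Antiortholattice (α : Type*) extends PBZLattice α where
  sharp_trivial : ∀ a : α, a ⊔ inv a = ⊤ → a = ⊥ ∨ a = ⊤

open BILattice BZLattice

/-- `e : Set ι → α` presents the antiortholattice `α` as the ordinal sum
`D2^ι ⊕ (D2^ι)^d` (possibly with a two-element chain in the middle): `e` is a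
bounded-lattice embedding of the Boolean algebra of subsets of `ι` onto the
lower half, and every element of `α` lies in the lower half or in its image
under the involution. -/
def IsBoolSumRep (ι : Type*) {α : Type*} [Antiortholattice α] (e : Set ι → α) : Prop :=
  (∀ s t : Set ι, e s ≤ e t ↔ s ⊆ t) ∧
  (∀ s t : Set ι, e (s ∩ t) = e s ⊓ e t) ∧
  (∀ s t : Set ι, e (s ∪ t) = e s ⊔ e t) ∧
  e ∅ = ⊥ ∧
  (∀ a : α, (∃ s : Set ι, a = e s) ∨ (∃ s : Set ι, a = inv (e s)))


section AuxBIL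
variable {α : Type*} [BILattice α]

lemma bil_inv_anti' {a b : α} (h : a ≤ b) : inv b ≤ inv a := BILattice.inv_anti a b h

lemma bil_inv_bot : inv (⊥ : α) = ⊤ := by
  refine le_antisymm le_top ?_
  have h := bil_inv_anti' (bot_le : (⊥ : α) ≤ inv ⊤)
  rwa [BILattice.inv_inv] at h

lemma bil_inv_top : inv (⊤ : α) = ⊥ := by
  have h := congrArg inv (bil_inv_bot (α := α))
  rw [BILattice.inv_inv] at h
  exact h.symm

lemma bil_inv_inj : Function.Injective (inv : α → α) := by
  intro a b h
  have := congrArg inv h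
  rwa [BILattice.inv_inv, BILattice.inv_inv] at this

lemma bil_inv_sup (a b : α) : inv (a ⊔ b) = inv a ⊓ inv b := by
  refine le_antisymm (le_inf (bil_inv_anti' le_sup_left) (bil_inv_anti' le_sup_right)) ?_
  have h1 : a ≤ inv (inv a ⊓ inv b) := by
    have := bil_inv_anti' (inf_le_left (a := inv a) (b := inv b))
    rwa [BILattice.inv_inv] at this
  have h2 : b ≤ inv (inv a ⊓ inv b) := by
    have := bil_inv_anti' (inf_le_right (a := inv a) (b := inv b))
    rwa [BILattice.inv_inv] at this
  have := bil_inv_anti' (sup_le h1 h2)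
  rwa [BILattice.inv_inv] at this

lemma bil_inv_inf (a b : α) : inv (a ⊓ b) = inv a ⊔ inv b := by
  have h : inv (inv a ⊔ inv b) = a ⊓ b := by
    rw [bil_inv_sup, BILattice.inv_inv, BILattice.inv_inv]
  rw [← h, BILattice.inv_inv]

end AuxBIL

section AuxAOL
variable {α : Type*} [Antiortholattice α]

lemma aol_brou_sharp (a : α) : brou a = ⊥ ∨ brou a = ⊤ := by
  apply Antiortholattice.sharp_trivial
  have h1 : brou a ⊓ inv (brou a) = ⊥ := by
    rw [← BZLattice.brou_brou]; exact BZLattice.brou_inf _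
  have h2 := congrArg inv h1
  rw [bil_inv_inf, bil_inv_bot, BILattice.inv_inv, sup_comm] at h2
  exact h2

lemma aol_brou_bot : brou (⊥ : α) = ⊤ := by
  rcases aol_brou_sharp (⊥ : α) with h | h
  · have h2 : brou (brou (⊥ : α)) = inv (brou (⊥ : α)) := BZLattice.brou_brou _
    rw [h, h, bil_inv_bot] at h2
    rw [h, ← h2]
  · exact h

lemma aol_brou_of_ne {a : α} (h : a ≠ ⊥) : brou a = ⊥ := by
  rcases aol_brou_sharp a with h1 | h1
  · exact h1
  · exfalso
    apply h
    have h2 := BZLattice.brou_inf a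
    rwa [h1, inf_top_eq] at h2

end AuxAOL

/-- For sets `∅ ≠ I ⊊ J` (here: `I` nonempty and `g : I → J` injective but not
surjective), the antiortholattice `D2^I ⊕ D2 ⊕ D2^I` embeds as a BZ-lattice into
`D2^J ⊕ D2^J`, via a map sending the lower Boolean block `D2^I` isomorphically
onto the ideal of `D2^J` generated by the atoms indexed by `I`, and acting
compatibly with the involution on the upper block. -/
theorem boolean_mid_sum_embeds {I J : Type*} [Nonempty I]
    (g : I → J) (hg : Function.Injective g) (hgns : ¬ Function.Surjective g)
    {A : Type*} [Antiortholattice A] (eA : Set I → A)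
    (hA : IsBoolSumRep I eA)
    (hmid₁ : eA Set.univ ≤ inv (eA Set.univ)) (hmid₂ : eA Set.univ ≠ inv (eA Set.univ))
    {B : Type*} [Antiortholattice B] (eB : Set J → B)
    (hB : IsBoolSumRep J eB) (hglue : inv (eB Set.univ) = eB Set.univ) :
    ∃ f : A → B, Function.Injective f ∧
      f ⊥ = ⊥ ∧ f ⊤ = ⊤ ∧
      (∀ x y : A, f (x ⊓ y) = f x ⊓ f y) ∧
      (∀ x y : A, f (x ⊔ y) = f x ⊔ f y) ∧
      (∀ x : A, f (inv x) = inv (f x)) ∧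
      (∀ x : A, f (brou x) = brou (f x)) ∧
      (∀ s : Set I, f (eA s) = eB (g '' s)) := by
    classical
  unfold IsBoolSumRep at hA hB
  obtain ⟨hle, hinf, hsup, hbotA, hcases⟩ := hA
  obtain ⟨kle, kinf, ksup, kbotB, kcases⟩ := hB
  have eAinj : Function.Injective eA := fun s t h =>
    Set.Subset.antisymm ((hle s t).1 h.le) ((hle t s).1 h.ge)
  have eBinj : Function.Injective eB := fun s t h =>
    Set.Subset.antisymm ((kle s t).1 h.le) ((kle t s).1 h.ge)
  have ginj : Function.Injective (Set.image g) := Set.image_injective.2 hg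
  have hAuniv : ∀ s : Set I, eA s ≤ eA Set.univ := fun s => (hle _ _).2 (Set.subset_univ s)
  have hBuniv : ∀ s : Set J, eB s ≤ eB Set.univ := fun s => (kle _ _).2 (Set.subset_univ s)
  have hcrossA : ∀ s t : Set I, eA s ≤ inv (eA t) :=
    fun s t => le_trans (hAuniv s) (le_trans hmid₁ (bil_inv_anti' (hAuniv t)))
  have hneA : ∀ s t : Set I, eA s ≠ inv (eA t) := by
    intro s t h
    apply hmid₂
    apply le_antisymm hmid₁
    calc inv (eA Set.univ) ≤ inv (eA t) := bil_inv_anti' (hAuniv t)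
      _ = eA s := h.symm
      _ ≤ eA Set.univ := hAuniv s
  have hcrossB : ∀ s t : Set J, eB s ≤ inv (eB t) :=
    fun s t => le_trans (hBuniv s) (le_trans (le_of_eq hglue.symm) (bil_inv_anti' (hBuniv t)))
  have hcrossBeq : ∀ s t : Set J, eB s = inv (eB t) → s = Set.univ ∧ t = Set.univ := by
    intro s t h
    have h1 : inv (eB t) ≤ eB Set.univ := by rw [← h]; exact hBuniv s
    have h2 : inv (eB Set.univ) ≤ inv (eB t) := bil_inv_anti' (hBuniv t)
    have h3 : inv (eB t) = inv (eB Set.univ) := le_antisymm (by rw [hglue]; exact h1) h2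
    have ht : t = Set.univ := eBinj (bil_inv_inj h3)
    have hs : s = Set.univ := eBinj (by rw [h, h3, hglue])
    exact ⟨hs, ht⟩
  set f : A → B := fun a =>
    if h : ∃ s : Set I, a = eA s then eB (g '' h.choose)
    else inv (eB (g '' (((hcases a).resolve_left h).choose))) with hfdef
  have fL : ∀ s : Set I, f (eA s) = eB (g '' s) := by
    intro s
    have hx : ∃ t : Set I, eA s = eA t := ⟨s, rfl⟩
    have hc : hx.choose = s := (eAinj hx.choose_spec).symm
    simp only [hfdef]
    rw [dif_pos hx, hc]
  have fU : ∀ s : Set I, f (inv (eA s)) = inv (eB (g '' s)) := by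
    intro s
    have hnx : ¬ ∃ t : Set I, inv (eA s) = eA t := by
      rintro ⟨t, ht⟩; exact hneA t s ht.symm
    have hc : ((hcases (inv (eA s))).resolve_left hnx).choose = s :=
      (eAinj (bil_inv_inj ((hcases (inv (eA s))).resolve_left hnx).choose_spec)).symm
    simp only [hfdef]
    rw [dif_neg hnx, hc]
  have himg_ne_univ : ∀ s : Set I, g '' s ≠ Set.univ := by
    intro s h
    obtain ⟨j, hj⟩ : ∃ b : J, ∀ a : I, g a ≠ b := by
      by_contra hc
      push_neg at hc
      exact hgns fun b => hc b
    have hmem : j ∈ g '' s := h ▸ Set.mem_univ j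
    obtain ⟨i, _, hi⟩ := hmem
    exact hj i hi
  have finj : Function.Injective f := by
    intro x y hxy
    rcases hcases x with ⟨s, rfl⟩ | ⟨s, rfl⟩ <;> rcases hcases y with ⟨t, rfl⟩ | ⟨t, rfl⟩
    · rw [fL, fL] at hxy
      exact congrArg eA (ginj (eBinj hxy))
    · rw [fL, fU] at hxy
      exact absurd (hcrossBeq _ _ hxy).1 (himg_ne_univ s)
    · rw [fU, fL] at hxy
      exact absurd (hcrossBeq _ _ hxy.symm).1 (himg_ne_univ t)
    · rw [fU, fU] at hxy
      exact congrArg (fun u => inv (eA u)) (ginj (eBinj (bil_inv_inj hxy)))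
  have fbot : f ⊥ = ⊥ := by
    rw [← hbotA, ← kbotB, fL, Set.image_empty]
  have ftop : f ⊤ = ⊤ := by
    have hta : (⊤ : A) = inv (eA ∅) := by rw [hbotA, bil_inv_bot]
    have htb : (⊤ : B) = inv (eB ∅) := by rw [kbotB, bil_inv_bot]
    rw [hta, htb, fU, Set.image_empty]
  have finf : ∀ x y : A, f (x ⊓ y) = f x ⊓ f y := by
    intro x y
    rcases hcases x with ⟨s, rfl⟩ | ⟨s, rfl⟩ <;> rcases hcases y with ⟨t, rfl⟩ | ⟨t, rfl⟩
    · rw [← hinf, fL, fL, fL, Set.image_inter hg, kinf]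
    · rw [inf_eq_left.2 (hcrossA s t), fL, fU, inf_eq_left.2 (hcrossB _ _)]
    · rw [inf_eq_right.2 (hcrossA t s), fL, fU, inf_eq_right.2 (hcrossB _ _)]
    · rw [← bil_inv_sup, ← hsup, fU, fU, fU, Set.image_union, ksup, bil_inv_sup]
  have fsup : ∀ x y : A, f (x ⊔ y) = f x ⊔ f y := by
    intro x y
    rcases hcases x with ⟨s, rfl⟩ | ⟨s, rfl⟩ <;> rcases hcases y with ⟨t, rfl⟩ | ⟨t, rfl⟩
    · rw [← hsup, fL, fL, fL, Set.image_union, ksup]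
    · rw [sup_eq_right.2 (hcrossA s t), fL, fU, sup_eq_right.2 (hcrossB _ _)]
    · rw [sup_eq_left.2 (hcrossA t s), fL, fU, sup_eq_left.2 (hcrossB _ _)]
    · rw [← bil_inv_inf, ← hinf, fU, fU, fU, Set.image_inter hg, kinf, bil_inv_inf]
  have finv : ∀ x : A, f (inv x) = inv (f x) := by
    intro x
    rcases hcases x with ⟨s, rfl⟩ | ⟨s, rfl⟩
    · rw [fU, fL]
    · rw [BILattice.inv_inv, fL, fU, BILattice.inv_inv]
  have fbrou : ∀ x : A, f (brou x) = brou (f x) := by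
    intro x
    by_cases hx : x = ⊥
    · subst hx
      rw [aol_brou_bot, ftop, fbot, aol_brou_bot]
    · have hfx : f x ≠ ⊥ := fun h => hx (finj (by rw [h, fbot]))
      rw [aol_brou_of_ne hx, aol_brou_of_ne hfx, fbot]
  exact ⟨f, finj, fbot, ftop, finf, fsup, finv, fbrou, fL⟩
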